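/- Let d ≥ 1, δ₀ > 0, β > 1/2, and let φ:(0,δ₀]→(0,∞) be continuous, decreasing, with lim_{r→0+} ∫_r^{δ₀} s^{d-1}φ(s) ds = +∞, and satisfying assumption (A2'): lim_{r→0+} (r^{βd} φ(r^β) + 1)/(r^d φ(r)) = 0. Then lim_{ε→0+} (∫_{ε^β}^{δ₀} r^{d-1} φ(r) dr) / (∫_ε^{δ₀} r^{d-1} φ(r) dr) = 0, and consequently lim_{ε→0+} (∫_{ε^β}^{δ₀} r^{d-1} φ(r) dr) / (∫_ε^{ε^β} r^{d-1} φ(r) dr) = 0. -/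
import Mathlib


open Set Filter intervalIntegral MeasureTheory

theorem stmt_6 (d : ℕ) (hd : 1 ≤ d) (δ₀ β : ℝ) (hδ₀ : 0 < δ₀) (hβ : 1/2 < β)
    (φ : ℝ → ℝ)
    (hpos : ∀ r ∈ Ioc (0:ℝ) δ₀, 0 < φ r)
    (hcont : ContinuousOn φ (Ioc 0 δ₀))
    (hmono : ∀ r ∈ Ioc (0:ℝ) δ₀, ∀ s ∈ Ioc (0:ℝ) δ₀, r ≤ s → φ s ≤ φ r)
    (hdiv : Tendsto (fun r => ∫ s in r..δ₀, s ^ (d - 1) * φ s)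
      (nhdsWithin 0 (Ioi 0)) atTop)
    (hA2' : Tendsto
      (fun r => (r ^ (β * d) * φ (r ^ β) + 1) / (r ^ (d : ℝ) * φ r))
      (nhdsWithin 0 (Ioi 0)) (nhds 0)) :
    Tendsto
      (fun ε => (∫ r in (ε ^ β)..δ₀, r ^ (d - 1) * φ r) /
        (∫ r in ε..δ₀, r ^ (d - 1) * φ r))
      (nhdsWithin 0 (Ioi 0)) (nhds 0) ∧
    Tendsto
      (fun ε => (∫ r in (ε ^ β)..δ₀, r ^ (d - 1) * φ r) /
        (∫ r in ε..(ε ^ β), r ^ (d - 1) * φ r))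
      (nhdsWithin 0 (Ioi 0)) (nhds 0) := by
  have hβ0 : (0:ℝ) < β := lt_trans (by norm_num) hβ
  set f : ℝ → ℝ := fun r => r ^ (d - 1) * φ r with hfdef
  set F : ℝ → ℝ := fun x => ∫ r in x..δ₀, f r with hFdef
  have hfc : ContinuousOn f (Ioc 0 δ₀) := ((continuous_pow (d-1)).continuousOn).mul hcont
  have hfpos : ∀ r ∈ Ioc (0:ℝ) δ₀, 0 < f r := fun r hr =>
    mul_pos (pow_pos hr.1 _) (hpos r hr)
  have hInt : ∀ a ∈ Ioc (0:ℝ) δ₀, ∀ b ∈ Ioc (0:ℝ) δ₀,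
      IntervalIntegrable f volume a b := by
    intro a ha b hb
    exact (hfc.mono (Set.ordConnected_Ioc.uIcc_subset ha hb)).intervalIntegrable
  have hFnn : ∀ x ∈ Ioc (0:ℝ) δ₀, 0 ≤ F x := by
    intro x hx
    exact intervalIntegral.integral_nonneg hx.2
      (fun u hu => (hfpos u ⟨lt_of_lt_of_le hx.1 hu.1, hu.2⟩).le)
  -- derivative of F
  have hFderiv : ∀ x ∈ Ioo (0:ℝ) δ₀, HasDerivAt F (-(f x)) x := by
    intro x hx
    have hmem : Ioo (0:ℝ) δ₀ ∈ nhds x := Ioo_mem_nhds hx.1 hx.2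
    have hcx : ContinuousAt f x :=
      (hfc.mono Ioo_subset_Ioc_self).continuousAt hmem
    have hms : StronglyMeasurableAtFilter f (nhds x) volume :=
      ContinuousOn.stronglyMeasurableAtFilter isOpen_Ioo
        (hfc.mono Ioo_subset_Ioc_self) x hx
    exact intervalIntegral.integral_hasDerivAt_left
      (hInt x ⟨hx.1, hx.2.le⟩ δ₀ ⟨hδ₀, le_refl _⟩) hms hcx
  -- membership event
  have hkey : ∀ c : ℝ, 0 < c → ∃ C : ℝ, 0 ≤ C ∧ ∀ᶠ ε in nhdsWithin (0:ℝ) (Ioi 0),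
      (ε ∈ Ioc (0:ℝ) δ₀ ∧ ε ^ β ∈ Ioc (0:ℝ) δ₀) ∧ F (ε ^ β) ≤ c * F ε + C := by
    intro c hc
    rw [Metric.tendsto_nhdsWithin_nhds] at hA2'
    obtain ⟨δ', hδ', hA2⟩ := hA2' (c / β) (by positivity)
    set η : ℝ := min (min (δ'/2) (δ₀/2)) ((δ₀/2) ^ β⁻¹) with hηdef
    have hη0 : 0 < η := by
      apply lt_min (lt_min (by linarith) (by linarith))
      positivity
    have hηδ' : η < δ' := lt_of_le_of_lt (le_trans (min_le_left _ _) (min_le_left _ _)) (by linarith)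
    have hηδ₀ : η < δ₀ := lt_of_le_of_lt (le_trans (min_le_left _ _) (min_le_right _ _)) (by linarith)
    have hηβ : η ^ β < δ₀ := by
      have h1 : η ^ β ≤ ((δ₀/2) ^ β⁻¹) ^ β :=
        Real.rpow_le_rpow hη0.le (min_le_right _ _) hβ0.le
      have h2 : ((δ₀/2) ^ β⁻¹) ^ β = δ₀/2 := by
        rw [← Real.rpow_mul (by positivity), inv_mul_cancel₀ hβ0.ne', Real.rpow_one]
      rw [h2] at h1; linarith
    -- memberships for x in Ioc 0 η
    have hmemx : ∀ x ∈ Ioc (0:ℝ) η, x ∈ Ioc (0:ℝ) δ₀ ∧ x ^ β ∈ Ioc (0:ℝ) δ₀ := by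
      intro x hx
      refine ⟨⟨hx.1, hx.2.trans hηδ₀.le⟩, ⟨Real.rpow_pos_of_pos hx.1 β, ?_⟩⟩
      exact le_trans (Real.rpow_le_rpow hx.1.le hx.2 hβ0.le) hηβ.le
    -- pointwise bound from A2'
    have hstar : ∀ x ∈ Ioc (0:ℝ) η, β * (x ^ (β * d) * φ (x ^ β)) ≤ c * (x ^ (d:ℝ) * φ x) := by
      intro x hx
      obtain ⟨hx1, hx2⟩ := hmemx x hx
      have hden : 0 < x ^ (d:ℝ) * φ x :=
        mul_pos (Real.rpow_pos_of_pos hx.1 _) (hpos x hx1)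
      have := hA2 (mem_Ioi.mpr hx.1) (by
        rw [Real.dist_eq, sub_zero, abs_of_pos hx.1]; exact lt_of_le_of_lt hx.2 hηδ')
      rw [Real.dist_eq, sub_zero] at this
      have hlt : (x ^ (β * d) * φ (x ^ β) + 1) / (x ^ (d:ℝ) * φ x) < c / β :=
        lt_of_le_of_lt (le_abs_self _) this
      rw [div_lt_iff₀ hden] at hlt
      have hnum : x ^ (β * d) * φ (x ^ β) < c / β * (x ^ (d:ℝ) * φ x) := by linarith
      calc β * (x ^ (β * d) * φ (x ^ β)) ≤ β * (c / β * (x ^ (d:ℝ) * φ x)) := by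
            exact mul_le_mul_of_nonneg_left hnum.le hβ0.le
        _ = c * (x ^ (d:ℝ) * φ x) := by field_simp
    -- the auxiliary function H and its derivative
    set H : ℝ → ℝ := fun u => c * F u - F (u ^ β) with hHdef
    have hHderiv : ∀ x ∈ Ioc (0:ℝ) η,
        HasDerivAt H (c * (-(f x)) - (-(f (x ^ β)) * (β * x ^ (β - 1)))) x := by
      intro x hx
      obtain ⟨hx1, hx2⟩ := hmemx x hx
      have hx1' : x ∈ Ioo (0:ℝ) δ₀ := ⟨hx.1, lt_of_le_of_lt hx.2 hηδ₀⟩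
      have hx2' : x ^ β ∈ Ioo (0:ℝ) δ₀ :=
        ⟨hx2.1, lt_of_le_of_lt (Real.rpow_le_rpow hx.1.le hx.2 hβ0.le) hηβ⟩
      have hcomp : HasDerivAt (fun u : ℝ => F (u ^ β)) (-(f (x ^ β)) * (β * x ^ (β - 1))) x := by
        have hpow : HasDerivAt (fun u : ℝ => u ^ β) (β * x ^ (β - 1)) x :=
          Real.hasDerivAt_rpow_const (Or.inl hx.1.ne')
        exact (hFderiv (x ^ β) hx2').comp x hpow
      exact ((hFderiv x hx1').const_mul c).sub hcomp
    -- the derivative is nonpositive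
    have hHd_le : ∀ x ∈ Ioc (0:ℝ) η,
        c * (-(f x)) - (-(f (x ^ β)) * (β * x ^ (β - 1))) ≤ 0 := by
      intro x hx
      have hx0 : 0 < x := hx.1
      have hkey := hstar x hx
      -- want : f (x^β) * (β * x^(β-1)) ≤ c * f x
      have hE1 : x * (c * f x) = c * (x ^ (d:ℝ) * φ x) := by
        have : x * x ^ (d - 1) = x ^ (d:ℝ) := by
          rw [show x ^ (d:ℝ) = x ^ (d:ℕ) from Real.rpow_natCast x d]
          rw [← pow_succ']
          congr 1
          omega
        simp only [hfdef]
        calc x * (c * (x ^ (d-1) * φ x)) = c * ((x * x ^ (d-1)) * φ x) := by ring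
          _ = c * (x ^ (d:ℝ) * φ x) := by rw [this]
      have hE2 : x * (f (x ^ β) * (β * x ^ (β - 1))) = β * (x ^ (β * d) * φ (x ^ β)) := by
        simp only [hfdef]
        have h1 : (x ^ β) ^ (d - 1) = x ^ (β * ((d:ℝ) - 1)) := by
          rw [show ((x:ℝ) ^ β) ^ (d - 1 : ℕ) = (x ^ β) ^ (((d - 1 : ℕ)):ℝ) from
            (Real.rpow_natCast _ _).symm, ← Real.rpow_mul hx0.le]
          congr 1
          have : ((d - 1 : ℕ) : ℝ) = (d:ℝ) - 1 := by
            push_cast [Nat.cast_sub hd]; ring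
          rw [this]
        have h2 : x * (x ^ (β * ((d:ℝ) - 1)) * x ^ (β - 1)) = x ^ (β * d) := by
          have e : x * (x ^ (β * ((d:ℝ) - 1)) * x ^ (β - 1))
              = x ^ ((1:ℝ) + (β * ((d:ℝ) - 1) + (β - 1))) := by
            rw [Real.rpow_add hx0, Real.rpow_add hx0, Real.rpow_one]
          rw [e]
          congr 1
          ring
        calc x * ((x ^ β) ^ (d-1) * φ (x ^ β) * (β * x ^ (β - 1)))
            = β * ((x * (x ^ (β * ((d:ℝ) - 1)) * x ^ (β - 1))) * φ (x ^ β)) := by rw [h1]; ring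
          _ = β * (x ^ (β * d) * φ (x ^ β)) := by rw [h2]
      have hmul : x * (f (x ^ β) * (β * x ^ (β - 1))) ≤ x * (c * f x) := by
        rw [hE1, hE2]; exact hkey
      have := le_of_mul_le_mul_left (by linarith [hmul] : x * (f (x ^ β) * (β * x ^ (β - 1))) ≤ x * (c * f x)) hx0
      linarith
    -- antitone argument
    refine ⟨F (η ^ β), hFnn _ ((hmemx η ⟨hη0, le_refl _⟩).2), ?_⟩
    filter_upwards [Ioc_mem_nhdsGT hη0] with ε hε
    obtain ⟨hε1, hε2⟩ := hmemx ε hε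
    refine ⟨⟨hε1, hε2⟩, ?_⟩
    have hanti : AntitoneOn H (Icc ε η) := by
      apply antitoneOn_of_deriv_nonpos (convex_Icc _ _)
      · intro x hx
        have hx' : x ∈ Ioc (0:ℝ) η := ⟨lt_of_lt_of_le hε.1 hx.1, hx.2⟩
        exact (hHderiv x hx').continuousAt.continuousWithinAt
      · intro x hx
        rw [interior_Icc] at hx
        have hx' : x ∈ Ioc (0:ℝ) η := ⟨lt_trans hε.1 hx.1, hx.2.le⟩
        exact (hHderiv x hx').differentiableAt.differentiableWithinAt
      · intro x hx
        rw [interior_Icc] at hx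
        have hx' : x ∈ Ioc (0:ℝ) η := ⟨lt_trans hε.1 hx.1, hx.2.le⟩
        rw [(hHderiv x hx').deriv]
        exact hHd_le x hx'
    have hHle : H η ≤ H ε :=
      hanti (left_mem_Icc.mpr hε.2) (right_mem_Icc.mpr hε.2) hε.2
    have hFη : 0 ≤ F η := hFnn η (hmemx η ⟨hη0, le_refl _⟩).1
    simp only [hHdef] at hHle
    nlinarith [hHle, mul_nonneg hc.le hFη]
  -- relation to hdiv
  have hdivF : Tendsto F (nhdsWithin (0:ℝ) (Ioi 0)) atTop := hdiv
  -- first limit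
  have h1 : Tendsto (fun ε => F (ε ^ β) / F ε) (nhdsWithin (0:ℝ) (Ioi 0)) (nhds 0) := by
    rw [Metric.tendsto_nhds]
    intro c hc
    obtain ⟨C, hC0, hev⟩ := hkey (c/3) (by positivity)
    have hFbig : ∀ᶠ ε in nhdsWithin (0:ℝ) (Ioi 0), max (3*C/c) 1 ≤ F ε :=
      hdivF.eventually_ge_atTop _
    filter_upwards [hev, hFbig] with ε hev1 hbig
    obtain ⟨⟨hεm, hεβm⟩, hle⟩ := hev1
    have hFpos : (0:ℝ) < F ε := lt_of_lt_of_le one_pos ((le_max_right _ _).trans hbig)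
    have hNnn : 0 ≤ F (ε ^ β) := hFnn _ hεβm
    rw [Real.dist_eq, sub_zero, abs_of_nonneg (div_nonneg hNnn hFpos.le), div_lt_iff₀ hFpos]
    have hCle : C ≤ (c/3) * F ε := by
      have h3 : 3*C/c ≤ F ε := (le_max_left _ _).trans hbig
      have : (c/3) * (3*C/c) ≤ (c/3) * F ε := mul_le_mul_of_nonneg_left h3 (by positivity)
      have heq : (c/3) * (3*C/c) = C := by field_simp
      linarith
    nlinarith [hle, hFpos, mul_pos hc hFpos]
  constructor
  · exact h1
  -- second limit
  · rw [Metric.tendsto_nhds]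
    intro c hc
    rw [Metric.tendsto_nhds] at h1
    have hsmall := h1 (min (1/2) (c/4)) (by positivity)
    have hFbig : ∀ᶠ ε in nhdsWithin (0:ℝ) (Ioi 0), (1:ℝ) ≤ F ε :=
      hdivF.eventually_ge_atTop _
    obtain ⟨C, hC0, hev⟩ := hkey 1 one_pos
    filter_upwards [hsmall, hFbig, hev] with ε hr hbig hmem
    obtain ⟨⟨hεm, hεβm⟩, _⟩ := hmem
    have hFpos : (0:ℝ) < F ε := lt_of_lt_of_le one_pos hbig
    have hNnn : 0 ≤ F (ε ^ β) := hFnn _ hεβm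
    rw [Real.dist_eq, sub_zero, abs_of_nonneg (div_nonneg hNnn hFpos.le)] at hr
    have hr2 : F (ε ^ β) < min (1/2) (c/4) * F ε := (div_lt_iff₀ hFpos).mp hr
    have hNhalf : F (ε ^ β) < F ε / 2 := by
      have : min (1/2) (c/4) * F ε ≤ (1/2) * F ε :=
        mul_le_mul_of_nonneg_right (min_le_left _ _) hFpos.le
      linarith
    have hNc4 : F (ε ^ β) < (c/4) * F ε := by
      have : min (1/2) (c/4) * F ε ≤ (c/4) * F ε :=
        mul_le_mul_of_nonneg_right (min_le_right _ _) hFpos.le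
      linarith
    -- split the integral
    have hsplit : (∫ r in ε..(ε ^ β), f r) = F ε - F (ε ^ β) := by
      have hadd : (∫ r in ε..(ε ^ β), f r) + (∫ r in (ε ^ β)..δ₀, f r) = ∫ r in ε..δ₀, f r :=
        intervalIntegral.integral_add_adjacent_intervals
          (hInt ε hεm (ε ^ β) hεβm) (hInt (ε ^ β) hεβm δ₀ ⟨hδ₀, le_refl _⟩)
      simp only [hFdef]
      linarith [hadd]
    have hD : F ε / 2 < F ε - F (ε ^ β) := by linarith
    have hDpos : 0 < F ε - F (ε ^ β) := lt_trans (by linarith) hD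
    show dist ((∫ r in (ε ^ β)..δ₀, f r) / (∫ r in ε..(ε ^ β), f r)) 0 < c
    rw [hsplit, Real.dist_eq, sub_zero,
      abs_of_nonneg (div_nonneg hNnn hDpos.le), div_lt_iff₀ hDpos]
    nlinarith [mul_nonneg hc.le (by linarith : (0:ℝ) ≤ F ε - F (ε ^ β) - F ε / 2)]
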